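/- Assume P is controllable and observable. Then for any observation s_o ∈ 𝒫(ℒ(P)) and any state x ∈ NS(s_o), for every x' in the unobservable reach UR_{Σ_P}(x) and every event σ ∈ γ̂_leg(NS(s_o)) \ γ̂_leg(x), the transition δ_P(x', σ) is undefined. -/
import Mathlib


open scoped Classical

/-- Extended (partial) transition function on finite event sequences. -/
def runOf {X E : Type} (δ : X → E → Option X) : List E → X → Option X
  | [], x => some x
  | e :: s, x => (δ x e).bind (runOf δ s)

/-- A string consisting only of unobservable events. -/
def UOString {E : Type} (uo : E → Prop) (s : List E) : Prop := ∀ e ∈ s, uo e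

/-- Natural projection erasing unobservable events. -/
noncomputable def proj {E : Type} (uo : E → Prop) (s : List E) : List E :=
  s.filter (fun e => decide (¬ uo e))

/-- Legal control pattern: events with some strictly rank-decreasing occurrence
within the unobservable reach of `x`. -/
def gammaLeg {X E : Type} (δ : X → E → Option X) (uo : E → Prop)
    (ξ : X → ℕ) (x : X) : Set E :=
  {σ | ∃ s y z, UOString uo s ∧ runOf δ s x = some y ∧ δ y σ = some z ∧ ξ z < ξ y}

/-- Unobservable reach of `x` under control pattern `γ`. -/
def UR {X E : Type} (δ : X → E → Option X) (uo : E → Prop)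
    (γ : Set E) (x : X) : Set X :=
  {x' | ∃ u : List E, (∀ e ∈ u, uo e ∧ e ∈ γ) ∧ runOf δ u x = some x'}

/-- Membership in the next-state estimate `NS(s_o)` after observation `s_o`. -/
inductive NSmem {X E : Type} (δ : X → E → Option X) (uo : E → Prop)
    (x0 : X) : List E → X → Prop
  | init : NSmem δ uo x0 [] x0
  | step {so : List E} {x x' x'' : X} {σ : E} :
      NSmem δ uo x0 so x →
      x' ∈ UR δ uo Set.univ x →
      ¬ uo σ → δ x' σ = some x'' → NSmem δ uo x0 (so ++ [σ]) x''

/-- Joint legal control pattern of the state estimate. -/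
def gammaLegNS {X E : Type} (δ : X → E → Option X) (uo : E → Prop) (ξ : X → ℕ)
    (x0 : X) (so : List E) : Set E :=
  {σ | ∃ x, NSmem δ uo x0 so x ∧ σ ∈ gammaLeg δ uo ξ x}

/-- Permissive control pattern at state `x` and step `k`. -/
def gammaPer {X E : Type} (δ : X → E → Option X) (uo : E → Prop) (ξ : X → ℕ)
    (η : ℕ → ℝ) (x : X) (k : ℕ) : Set E :=
  {σ | ∀ s z, UOString uo s → runOf δ (s ++ [σ]) x = some z → (ξ z : ℝ) < η k}

/-- Joint permissive control pattern of the state estimate. -/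
def gammaPerNS {X E : Type} (δ : X → E → Option X) (uo : E → Prop) (ξ : X → ℕ)
    (η : ℕ → ℝ) (x0 : X) (so : List E) (k : ℕ) : Set E :=
  {σ | ∀ x, NSmem δ uo x0 so x → σ ∈ gammaPer δ uo ξ η x k}

/-- The on-line supervisor's control action after observation `so`. -/
def supAct {X E : Type} (δ : X → E → Option X) (uo : E → Prop) (ξ : X → ℕ)
    (η : ℕ → ℝ) (x0 : X) (so : List E) : Set E :=
  gammaLegNS δ uo ξ x0 so ∪ gammaPerNS δ uo ξ η x0 so so.length

/-- `ξ̂(x)`: min over controllable successors' ranks if no uncontrollable event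
is defined at `x`, else max over uncontrollable successors' ranks. -/
noncomputable def hatXi {X E : Type} (δ : X → E → Option X) (uc : E → Prop)
    (ξ : X → ℕ) (x : X) : ℕ :=
  if ∀ e, uc e → δ x e = none then
    sInf {n | ∃ e y, ¬ uc e ∧ δ x e = some y ∧ ξ y = n}
  else
    sSup {n | ∃ e y, uc e ∧ δ x e = some y ∧ ξ y = n}

/-- The update operator `up_α(r, x)`. -/
noncomputable def upA {X : Type} (α : ℕ) (F : Set X) (x : X) (r : ℕ) : ℕ :=
  if x ∉ F ∧ r < α then r + 1 else r

/-- Observability of the product automaton w.r.t. `ξ` and the projection. -/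
def Observable {X E : Type} (δ : X → E → Option X) (uo : E → Prop)
    (ξ : X → ℕ) (x0 : X) : Prop :=
  ∀ s s' : List E, ∀ σ : E,
    (runOf δ s x0).isSome → (runOf δ s' x0).isSome →
    proj uo s = proj uo s' →
    (∃ y z, runOf δ s x0 = some y ∧ δ y σ = some z ∧ ξ z < ξ y) →
    (runOf δ (s' ++ [σ]) x0).isSome →
    ∃ y z, runOf δ s' x0 = some y ∧ δ y σ = some z ∧ ξ z < ξ y

/-- The list of states visited along a run. -/
def visited {X E : Type} (δ : X → E → Option X) : List E → X → Option (List X)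
  | [], x => some [x]
  | e :: s, x => (δ x e).bind fun y => (visited δ s y).map (fun l => x :: l)

theorem runOf_append {X E : Type} (δ : X → E → Option X) (s t : List E) (x : X) :
    runOf δ (s ++ t) x = (runOf δ s x).bind (runOf δ t) := by
  induction s generalizing x with
  | nil => simp [runOf]
  | cons e s ih =>
    simp only [List.cons_append, runOf]
    cases δ x e with
    | none => simp
    | some y => simp [ih]

theorem proj_append {E : Type} (uo : E → Prop) (s t : List E) :
    proj uo (s ++ t) = proj uo s ++ proj uo t := by
  simp [proj, List.filter_append]

theorem proj_uo {E : Type} (uo : E → Prop) (s : List E) (h : UOString uo s) :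
    proj uo s = [] := by
  simp only [proj, List.filter_eq_nil_iff]
  intro e he
  simp [h e he]

theorem NSmem_exists_run {X E : Type} (δ : X → E → Option X) (uo : E → Prop)
    (x0 : X) (so : List E) (x : X) (h : NSmem δ uo x0 so x) :
    ∃ t : List E, runOf δ t x0 = some x ∧ proj uo t = so := by
  induction h with
  | init => exact ⟨[], rfl, rfl⟩
  | @step so x x' x'' σ _ hUR hno hδ ih =>
    obtain ⟨t, ht, hpt⟩ := ih
    obtain ⟨u, hu, hru⟩ := hUR
    refine ⟨t ++ u ++ [σ], ?_, ?_⟩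
    · rw [runOf_append, runOf_append, ht]
      simp [hru, runOf, hδ]
    · rw [proj_append, proj_append, hpt, proj_uo uo u (fun e he => (hu e he).1)]
      simp [proj, hno]

/-- under controllability and observability, an event in the joint
legal pattern `γ̂_leg(NS(s_o))` but not in `γ̂_leg(x)` is undefined everywhere
in the unobservable reach of `x ∈ NS(s_o)`. -/
theorem stmt6 {X E : Type} (δ : X → E → Option X) (uo : E → Prop)
    (x0 : X) (ξ : X → ℕ) (α : ℕ)
    (hctrl : ξ x0 < α)
    (hobs : Observable δ uo ξ x0)
    (so : List E)
    (hso : ∃ t : List E, (runOf δ t x0).isSome ∧ proj uo t = so) :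
    ∀ x : X, NSmem δ uo x0 so x →
      ∀ x' ∈ UR δ uo Set.univ x,
        ∀ σ : E, σ ∈ gammaLegNS δ uo ξ x0 so → σ ∉ gammaLeg δ uo ξ x →
          δ x' σ = none := by
  intro x hx x' hx' σ hσNS hσx
  by_contra hne
  obtain ⟨w, hw⟩ := Option.ne_none_iff_exists'.mp hne
  -- witness from gammaLegNS
  obtain ⟨x1, hx1, s1, y, z, hs1uo, hrun1, hδ1, hlt1⟩ := hσNS
  obtain ⟨t1, ht1, hpt1⟩ := NSmem_exists_run δ uo x0 so x1 hx1
  obtain ⟨t, ht, hpt⟩ := NSmem_exists_run δ uo x0 so x hx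
  obtain ⟨u, hu, hru⟩ := hx'
  have huuo : UOString uo u := fun e he => (hu e he).1
  -- full strings
  have hrunA : runOf δ (t1 ++ s1) x0 = some y := by
    rw [runOf_append, ht1]; simpa using hrun1
  have hrunB : runOf δ (t ++ u) x0 = some x' := by
    rw [runOf_append, ht]; simpa using hru
  have hproj : proj uo (t1 ++ s1) = proj uo (t ++ u) := by
    rw [proj_append, proj_append, hpt1, hpt, proj_uo uo s1 hs1uo,
      proj_uo uo u huuo]
  have hsomeσ : (runOf δ ((t ++ u) ++ [σ]) x0).isSome := by
    rw [runOf_append, hrunB]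
    simp [runOf, hw]
  obtain ⟨y', z', hy', hδ', hlt'⟩ :=
    hobs (t1 ++ s1) (t ++ u) σ (by simp [hrunA]) (by simp [hrunB]) hproj
      ⟨y, z, hrunA, hδ1, hlt1⟩ hsomeσ
  have heq : y' = x' := by rw [hrunB] at hy'; exact Option.some.injEq .. |>.mp hy'.symm
  rw [heq] at hδ' hlt'
  exact hσx ⟨u, x', z', huuo, hru, hδ', hlt'⟩
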